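/- arXiv:1012.5535 — 2 statements merged into one kernel-verified Lean document; each statement's English description precedes it below -/
import Mathlib

section
/- Let x ∈ [0,1] be non-dyadic with digit densities D_1(x) = lim I_n/n existing, 0 < D_1(x) < 1, D_0(x) = 1 - D_1(x). If a^{D_0(x)}·(1-a)^{D_1(x)} > 1/2, then L_a'(x) = +∞ (the difference quotients tend to +∞). -/
open Topology Filter Set

/-- The de Rham functional equation characterizing Lebesgue's singular function `L_a`
on `[0,1]`, together with continuity. -/
def deRham (a : ℝ) (L : ℝ → ℝ) : Prop :=
  ContinuousOn L (Set.Icc 0 1) ∧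
  (∀ x ∈ Set.Icc (0:ℝ) (1/2), L x = a * L (2*x)) ∧
  (∀ x ∈ Set.Icc (1/2:ℝ) 1, L x = (1-a) * L (2*x - 1) + a)

/-!
Write `x_m` for the truncation of `x` after `m` binary digits and `w_m = a^(m - I_m) (1-a)^(I_m)`.
The functional equation makes `L` on the cylinder `[x_m, x_m + 2^(-m)]` a copy of `L` on `[0, 1]`
scaled by `w_m`, and `L` is increasing. If `2^(-n-1) ≤ |h| ≤ 2^(-n)`, let digit `j + 1` be the
first digit after position `n + 1` that equals `1` (when `h < 0`) or `0` (when `h > 0`). Then `x`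
lies in the half of its level-`j` cylinder away from `x + h`, and `x + h` lies outside that
cylinder, so `|L (x + h) - L x| ≥ min a (1-a) · w_j` and the slope is at least
`min a (1-a) · 2^n · w_j`.
Since `I_j / j → d ∈ (0, 1)`, `log w_j ≈ j ((1-d) log a + d log (1-a))` and the run of equal
digits between positions `n + 1` and `j` has length `o(j)`; hence `2^n w_j` grows like
`(2 a^(1-d) (1-a)^d)^(j (1 + o(1)))`, which tends to infinity.
-/

noncomputable def dyadicTrunc (ε : ℕ → ℕ) (m : ℕ) : ℝ :=
  ∑ k ∈ Finset.range m, (ε (k+1) : ℝ) / 2 ^ (k+1)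

noncomputable def cylinderWeight (a : ℝ) (ε : ℕ → ℕ) (m : ℕ) : ℝ :=
  ∏ k ∈ Finset.range m, if ε (k+1) = 1 then 1 - a else a

section Digits

variable {ε : ℕ → ℕ}

theorem dyadicTrunc_succ (m : ℕ) :
    dyadicTrunc ε (m+1) = dyadicTrunc ε m + ε (m+1) / 2 ^ (m+1) :=
  Finset.sum_range_succ _ _

theorem dyadicTrunc_nonneg (m : ℕ) : 0 ≤ dyadicTrunc ε m :=
  Finset.sum_nonneg fun _ _ => by positivity

theorem dyadicTrunc_add_le_one (hε : ∀ n, ε n ≤ 1) (m : ℕ) : dyadicTrunc ε m + 1 / 2 ^ m ≤ 1 := by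
  induction m with
  | zero => simp [dyadicTrunc]
  | succ m ih =>
    have : (ε (m+1) : ℝ) ≤ 1 := by exact_mod_cast hε (m+1)
    rw [dyadicTrunc_succ, pow_succ]
    have h2 : (0:ℝ) < 2 ^ m := by positivity
    calc _ = dyadicTrunc ε m + (ε (m+1) + 1) / 2 / 2 ^ m := by field_simp; ring
      _ ≤ dyadicTrunc ε m + (1 + 1) / 2 / 2 ^ m := by gcongr
      _ ≤ 1 := by linarith [ih]

theorem dyadicTrunc_mem_Icc (hε : ∀ n, ε n ≤ 1) (m : ℕ) : dyadicTrunc ε m ∈ Icc 0 1 :=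
  ⟨dyadicTrunc_nonneg m, by
    linarith [dyadicTrunc_add_le_one hε m, one_div_pos.2 (pow_pos two_pos m : (0:ℝ) < 2 ^ m)]⟩

theorem tsum_mem_Icc_dyadicTrunc (hε : ∀ n, ε n ≤ 1) (m : ℕ) :
    ∑' n, (ε (n+1) : ℝ) / 2 ^ (n+1) ∈ Icc (dyadicTrunc ε m) (dyadicTrunc ε m + 1 / 2 ^ m) := by
  set digits : ℕ → Fin 2 := fun n => ⟨ε (n+1), Nat.lt_succ_of_le (hε (n+1))⟩
  have hterm : Real.ofDigitsTerm digits = fun n => (ε (n+1) : ℝ) / 2 ^ (n+1) := by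
    ext n; simp [Real.ofDigitsTerm, digits, div_eq_mul_inv]
  have h := Real.ofDigits_eq_sum_add_ofDigits digits m
  rw [Real.ofDigits, hterm] at h
  have h0 := Real.ofDigits_nonneg fun i => digits (i + m)
  have h1 := Real.ofDigits_le_one fun i => digits (i + m)
  rw [h, ← dyadicTrunc, Nat.cast_ofNat]
  constructor
  · have : (0:ℝ) ≤ (2 ^ m)⁻¹ := by positivity
    nlinarith
  · rw [one_div]
    have : (0:ℝ) ≤ (2 ^ m)⁻¹ := by positivity
    nlinarith

end Digits

section Weight

variable {a : ℝ} {ε : ℕ → ℕ}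

theorem cylinderWeight_succ (m : ℕ) :
    cylinderWeight a ε (m+1) = cylinderWeight a ε m * if ε (m+1) = 1 then 1 - a else a :=
  Finset.prod_range_succ _ _

theorem cylinderWeight_pos (ha0 : 0 < a) (ha1 : a < 1) (m : ℕ) : 0 < cylinderWeight a ε m :=
  Finset.prod_pos fun _ _ => by split_ifs <;> linarith

end Weight

namespace deRham

variable {a : ℝ} {L : ℝ → ℝ} {ε : ℕ → ℕ}

theorem map_zero (hL : deRham a L) (ha1 : a < 1) : L 0 = 0 := by
  have h := hL.2.1 0 (by norm_num)
  rw [mul_zero] at h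
  nlinarith

theorem map_one (hL : deRham a L) (ha0 : 0 < a) : L 1 = 1 := by
  have h := hL.2.2 1 (by norm_num)
  norm_num at h
  nlinarith

theorem map_half (hL : deRham a L) (ha0 : 0 < a) : L (1/2) = a := by
  have h := hL.2.1 (1/2) (by norm_num)
  norm_num [hL.map_one ha0] at h
  exact h

theorem mapsTo_Icc (hL : deRham a L) (ha0 : 0 < a) (ha1 : a < 1) :
    MapsTo L (Icc 0 1) (Icc 0 1) := by
  obtain ⟨z, hz, hmax⟩ := isCompact_Icc.exists_isMaxOn (nonempty_Icc.2 zero_le_one) hL.1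
  obtain ⟨w, hw, hmin⟩ := isCompact_Icc.exists_isMinOn (nonempty_Icc.2 zero_le_one) hL.1
  have hz1 : L z ≤ 1 := by
    rcases le_total z (1/2) with h | h
    · have : L (2 * z) ≤ L z := hmax ⟨by linarith [hz.1], by linarith⟩
      nlinarith [hL.2.1 z ⟨hz.1, h⟩]
    · have : L (2 * z - 1) ≤ L z := hmax ⟨by linarith, by linarith [hz.2]⟩
      nlinarith [hL.2.2 z ⟨h, hz.2⟩]
  have hw0 : 0 ≤ L w := by
    rcases le_total w (1/2) with h | h
    · have : L w ≤ L (2 * w) := hmin ⟨by linarith [hw.1], by linarith⟩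
      nlinarith [hL.2.1 w ⟨hw.1, h⟩]
    · have : L w ≤ L (2 * w - 1) := hmin ⟨by linarith, by linarith [hw.2]⟩
      nlinarith [hL.2.2 w ⟨h, hw.2⟩]
  exact fun y hy => ⟨hw0.trans (hmin hy), (hmax hy).trans hz1⟩

theorem monotoneOn (hL : deRham a L) (ha0 : 0 < a) (ha1 : a < 1) : MonotoneOn L (Icc 0 1) := by
  set K : Set (ℝ × ℝ) := (Icc 0 1 ×ˢ Icc 0 1) ∩ {p | p.1 ≤ p.2}
  have hK : IsCompact K :=
    (isCompact_Icc.prod isCompact_Icc).inter_right (isClosed_le continuous_fst continuous_snd)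
  have hcont : ContinuousOn (fun p : ℝ × ℝ => L p.1 - L p.2) K :=
    (hL.1.comp continuousOn_fst fun p hp => hp.1.1).sub
      (hL.1.comp continuousOn_snd fun p hp => hp.1.2)
  obtain ⟨⟨x, y⟩, ⟨⟨hx, hy⟩, hxy : x ≤ y⟩, hmax⟩ :=
    hK.exists_isMaxOn ⟨(0, 0), ⟨⟨by norm_num, by norm_num⟩, show (0:ℝ) ≤ 0 from le_rfl⟩⟩ hcont
  have hmax' : ∀ u ∈ Icc (0:ℝ) 1, ∀ v ∈ Icc (0:ℝ) 1, u ≤ v → L u - L v ≤ L x - L y :=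
    fun u hu v hv huv => hmax (show (u, v) ∈ K from ⟨⟨hu, hv⟩, huv⟩)
  -- At a maximising pair inside one half the functional equation scales the maximum by `a` or
  -- `1 - a`; a pair straddling `1/2` has `L x ≤ a ≤ L y`.
  have hM : L x - L y ≤ 0 := by
    rcases le_total y (1/2) with hy2 | hy2
    · have := hmax' (2 * x) ⟨by linarith [hx.1], by linarith⟩ (2 * y)
        ⟨by linarith [hy.1], by linarith⟩ (by linarith)
      nlinarith [hL.2.1 x ⟨hx.1, by linarith⟩, hL.2.1 y ⟨hy.1, hy2⟩]
    rcases le_total (1/2) x with hx2 | hx2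
    · have := hmax' (2 * x - 1) ⟨by linarith, by linarith [hx.2]⟩ (2 * y - 1)
        ⟨by linarith, by linarith [hy.2]⟩ (by linarith)
      nlinarith [hL.2.2 x ⟨hx2, hx.2⟩, hL.2.2 y ⟨by linarith, hy.2⟩]
    · have h1 := (hL.mapsTo_Icc ha0 ha1
        (show 2 * x ∈ Icc (0:ℝ) 1 from ⟨by linarith [hx.1], by linarith⟩)).2
      have h2 := (hL.mapsTo_Icc ha0 ha1
        (show 2 * y - 1 ∈ Icc (0:ℝ) 1 from ⟨by linarith, by linarith [hy.2]⟩)).1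
      nlinarith [hL.2.1 x ⟨hx.1, hx2⟩, hL.2.2 y ⟨hy2, hy.2⟩]
  intro u hu v hv huv
  linarith [hmax' u hu v hv huv]

theorem map_half_add (hL : deRham a L) (ha0 : 0 < a) (ha1 : a < 1) {e : ℕ} (he : e ≤ 1)
    {s : ℝ} (hs : s ∈ Icc 0 1) :
    L ((e + s) / 2) = L (e / 2) + (if e = 1 then 1 - a else a) * L s := by
  rcases Nat.le_one_iff_eq_zero_or_eq_one.1 he with rfl | rfl
  · have h := hL.2.1 (s / 2) ⟨by linarith [hs.1], by linarith [hs.2]⟩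
    rw [mul_div_cancel₀ s two_ne_zero] at h
    norm_num [h, hL.map_zero ha1]
  · have h := hL.2.2 ((1 + s) / 2) ⟨by linarith [hs.1], by linarith [hs.2]⟩
    rw [show 2 * ((1 + s) / 2) - 1 = s by ring] at h
    norm_num [h, ← one_div, hL.map_half ha0]
    ring

theorem map_dyadicTrunc_add (hL : deRham a L) (ha0 : 0 < a) (ha1 : a < 1) (hε : ∀ n, ε n ≤ 1)
    (m : ℕ) {s : ℝ} (hs : s ∈ Icc 0 1) :
    L (dyadicTrunc ε m + s / 2 ^ m) = L (dyadicTrunc ε m) + cylinderWeight a ε m * L s := by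
  induction m generalizing s with
  | zero => simp [dyadicTrunc, cylinderWeight, hL.map_zero ha1]
  | succ m ih =>
    have hshift : ∀ t : ℝ, dyadicTrunc ε (m+1) + t / 2 ^ (m+1)
        = dyadicTrunc ε m + ((ε (m+1) + t) / 2) / 2 ^ m := by
      intro t; rw [dyadicTrunc_succ, pow_succ]; field_simp; ring
    have he : (ε (m+1) : ℝ) ≤ 1 := by exact_mod_cast hε (m+1)
    have hmem : ∀ t ∈ Icc (0:ℝ) 1, (ε (m+1) + t) / 2 ∈ Icc (0:ℝ) 1 := fun t ht =>
      ⟨by have := ht.1; positivity, by linarith [ht.2]⟩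
    have hbase := hshift 0
    simp only [zero_div, add_zero] at hbase
    have hhalf : (ε (m+1) : ℝ) / 2 ∈ Icc (0:ℝ) 1 := by simpa using hmem 0 ⟨le_rfl, zero_le_one⟩
    rw [hshift, ih (hmem s hs), hL.map_half_add ha0 ha1 (hε (m+1)) hs, cylinderWeight_succ,
      hbase, ih hhalf]
    ring

theorem mul_cylinderWeight_le_sub_of_digit_eq_one (hL : deRham a L) (ha0 : 0 < a) (ha1 : a < 1)
    (hε : ∀ n, ε n ≤ 1) {j : ℕ} (hj : ε (j+1) = 1) {x y : ℝ}
    (hx : x ∈ Icc (dyadicTrunc ε (j+1)) 1) (hy : y ∈ Icc 0 (dyadicTrunc ε j)) :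
    a * cylinderWeight a ε j ≤ L x - L y := by
  have hsplit : dyadicTrunc ε (j+1) = dyadicTrunc ε j + (1/2) / 2 ^ j := by
    rw [dyadicTrunc_succ, hj, pow_succ]; field_simp; norm_num
  have hstep := hL.map_dyadicTrunc_add ha0 ha1 hε j (s := 1/2) (by norm_num)
  rw [← hsplit, hL.map_half ha0] at hstep
  have hmono := hL.monotoneOn ha0 ha1
  have hj₁ := dyadicTrunc_mem_Icc hε (j+1)
  have hj₀ := dyadicTrunc_mem_Icc hε j
  have hxL := hmono hj₁ ⟨hj₁.1.trans hx.1, hx.2⟩ hx.1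
  have hyL := hmono ⟨hy.1, hy.2.trans hj₀.2⟩ hj₀ hy.2
  linarith

theorem mul_cylinderWeight_le_sub_of_digit_eq_zero (hL : deRham a L) (ha0 : 0 < a) (ha1 : a < 1)
    (hε : ∀ n, ε n ≤ 1) {j : ℕ} (hj : ε (j+1) = 0) {x y : ℝ}
    (hx : x ∈ Icc 0 (dyadicTrunc ε (j+1) + 1 / 2 ^ (j+1)))
    (hy : y ∈ Icc (dyadicTrunc ε j + 1 / 2 ^ j) 1) :
    (1 - a) * cylinderWeight a ε j ≤ L y - L x := by
  have hsplit : dyadicTrunc ε (j+1) + 1 / 2 ^ (j+1) = dyadicTrunc ε j + (1/2) / 2 ^ j := by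
    rw [dyadicTrunc_succ, hj, pow_succ]; field_simp; norm_num
  have hhalf := hL.map_dyadicTrunc_add ha0 ha1 hε j (s := 1/2) (by norm_num)
  have hone := hL.map_dyadicTrunc_add ha0 ha1 hε j (s := 1) (by norm_num)
  rw [← hsplit, hL.map_half ha0] at hhalf
  rw [hL.map_one ha0] at hone
  have hmono := hL.monotoneOn ha0 ha1
  have hcyl : ∀ m, dyadicTrunc ε m + 1 / 2 ^ m ∈ Icc (0:ℝ) 1 := fun m =>
    ⟨by have := dyadicTrunc_nonneg (ε := ε) m; positivity, dyadicTrunc_add_le_one hε m⟩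
  have hj₁ := hcyl (j+1)
  have hr := hcyl j
  have hxL := hmono ⟨hx.1, hx.2.trans hj₁.2⟩ hj₁ hx.2
  have hyL := hmono hr ⟨hr.1.trans hy.1, hy.2⟩ hy.1
  linarith

end deRham

theorem exists_run_length_le {u : ℕ → ℝ} {d : ℝ}
    (hu : Tendsto (fun n : ℕ => (∑ k ∈ Finset.range n, u k) / n) atTop (𝓝 d))
    {δ : ℝ} (hδ : 0 < δ) :
    ∃ N, ∀ i j : ℕ, N ≤ i → i ≤ j → ∀ b : ℝ, (∀ k ∈ Finset.Ico i j, u k = b) →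
      |b - d| * (j - i) ≤ δ * j := by
  obtain ⟨N, hN⟩ := Metric.tendsto_atTop.1 hu (δ/2) (half_pos hδ)
  have hdev : ∀ n, max N 1 ≤ n → |∑ k ∈ Finset.range n, u k - d * n| ≤ δ/2 * n := by
    intro n hn
    have hn0 : (0:ℝ) < n := by exact_mod_cast (le_max_right N 1).trans hn
    have hclose := (hN n ((le_max_left N 1).trans hn)).le
    rw [Real.dist_eq] at hclose
    calc |∑ k ∈ Finset.range n, u k - d * n|
        = |(∑ k ∈ Finset.range n, u k) / n - d| * n := by
          rw [← abs_of_pos hn0, ← abs_mul, abs_of_pos hn0]; congr 1; field_simp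
      _ ≤ δ/2 * n := by gcongr
  refine ⟨max N 1, fun i j hi hij b hb => ?_⟩
  have hsum : ∑ k ∈ Finset.range j, u k = ∑ k ∈ Finset.range i, u k + b * (j - i) := by
    rw [← Finset.sum_range_add_sum_Ico _ hij, Finset.sum_congr rfl hb, Finset.sum_const,
      Nat.card_Ico, nsmul_eq_mul, Nat.cast_sub hij, mul_comm]
  have hij' : (i:ℝ) ≤ j := by exact_mod_cast hij
  calc |b - d| * (j - i)
      = |(∑ k ∈ Finset.range j, u k - d * j) - (∑ k ∈ Finset.range i, u k - d * i)| := by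
        rw [hsum, ← abs_of_nonneg (sub_nonneg.2 hij'), ← abs_mul,
          abs_of_nonneg (sub_nonneg.2 hij')]
        ring_nf
    _ ≤ |∑ k ∈ Finset.range j, u k - d * j| + |∑ k ∈ Finset.range i, u k - d * i| := abs_sub _ _
    _ ≤ δ/2 * j + δ/2 * i := add_le_add (hdev j ((hi.trans hij))) (hdev i hi)
    _ ≤ δ * j := by nlinarith

theorem tendsto_log_cylinderWeight_div {a d : ℝ} {ε : ℕ → ℕ} (ha0 : 0 < a) (ha1 : a < 1)
    (hε : ∀ n, ε n ≤ 1)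
    (hd : Tendsto (fun n : ℕ => (∑ k ∈ Finset.range n, (ε (k+1) : ℝ)) / n) atTop (𝓝 d)) :
    Tendsto (fun j : ℕ => Real.log (cylinderWeight a ε j) / j) atTop
      (𝓝 ((1 - d) * Real.log a + d * Real.log (1 - a))) := by
  have hlog : ∀ j : ℕ, Real.log (cylinderWeight a ε j)
      = j * Real.log a + (∑ k ∈ Finset.range j, (ε (k+1) : ℝ)) * (Real.log (1-a) - Real.log a) := by
    intro j
    induction j with
    | zero => simp [cylinderWeight]
    | succ j ih =>
      rw [cylinderWeight_succ, Real.log_mul (cylinderWeight_pos ha0 ha1 j).ne'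
        (by split_ifs <;> linarith), ih, Finset.sum_range_succ]
      rcases Nat.le_one_iff_eq_zero_or_eq_one.1 (hε (j+1)) with h | h <;> simp [h] <;> ring
  have heq : (fun j : ℕ => Real.log a + (∑ k ∈ Finset.range j, (ε (k+1) : ℝ)) / j
      * (Real.log (1-a) - Real.log a)) =ᶠ[atTop]
      fun j : ℕ => Real.log (cylinderWeight a ε j) / j := by
    filter_upwards [eventually_ne_atTop 0] with j hj
    rw [hlog]; field_simp
  convert (tendsto_const_nhds.add (hd.mul_const _)).congr' heq using 2
  ring

theorem log_two_add_mul_log_pos {a d : ℝ} (ha0 : 0 < a) (ha1 : a < 1)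
    (hcrit : a ^ (1 - d) * (1-a) ^ d > 1/2) :
    0 < Real.log 2 + ((1 - d) * Real.log a + d * Real.log (1 - a)) := by
  have h := Real.log_lt_log (by norm_num) hcrit
  rw [Real.log_mul (by positivity) (by positivity), Real.log_rpow ha0,
    Real.log_rpow (by linarith), one_div, Real.log_inv] at h
  linarith

theorem min_le_abs_natCast_sub (d : ℝ) (b : ℕ) : min d (1 - d) ≤ |(b:ℝ) - d| := by
  rcases Nat.eq_zero_or_pos b with rfl | hb
  · simpa using (min_le_left d (1 - d)).trans (le_abs_self d)
  · have : (1:ℝ) ≤ b := by exact_mod_cast hb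
    exact (min_le_right d (1 - d)).trans ((by linarith : 1 - d ≤ (b:ℝ) - d).trans (le_abs_self _))

theorem exists_le_two_pow_mul_cylinderWeight {a d : ℝ} {ε : ℕ → ℕ} (ha0 : 0 < a) (ha1 : a < 1)
    (hε : ∀ n, ε n ≤ 1)
    (hd : Tendsto (fun n : ℕ => (∑ k ∈ Finset.range n, (ε (k+1) : ℝ)) / n) atTop (𝓝 d))
    (hd0 : 0 < d) (hd1 : d < 1) (hcrit : a ^ (1 - d) * (1-a) ^ d > 1/2) (C : ℝ) :
    ∃ N, ∀ n j b : ℕ, N ≤ n → n < j → (∀ k ∈ Finset.Ico (n+1) j, ε (k+1) = b) →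
      C ≤ 2 ^ n * cylinderWeight a ε j := by
  set μ := (1 - d) * Real.log a + d * Real.log (1 - a)
  set ρ := Real.log 2 + μ
  have hρ : 0 < ρ := log_two_add_mul_log_pos ha0 ha1 hcrit
  set c := min d (1 - d)
  have hc : 0 < c := lt_min hd0 (by linarith)
  have hlog2 : 0 < Real.log 2 := Real.log_pos one_lt_two
  obtain ⟨N₁, hrun⟩ := exists_run_length_le hd (δ := c * ρ / (4 * Real.log 2)) (by positivity)
  obtain ⟨N₂, hw⟩ := eventually_atTop.1 <|
    (tendsto_log_cylinderWeight_div ha0 ha1 hε hd).eventually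
      (eventually_ge_nhds (show μ - ρ/4 < μ by linarith))
  have hexp : Tendsto (fun n : ℕ => Real.exp (ρ/2 * n - Real.log 2)) atTop atTop :=
    Real.tendsto_exp_atTop.comp <| tendsto_atTop_add_const_right _ _ <|
      tendsto_natCast_atTop_atTop.const_mul_atTop (half_pos hρ)
  obtain ⟨N₃, hC⟩ := eventually_atTop.1 (hexp.eventually_ge_atTop C)
  refine ⟨max (max N₁ N₂) N₃, fun n j b hn hnj hb => ?_⟩
  have hj0 : (0:ℝ) < j := by exact_mod_cast (Nat.zero_le n).trans_lt hnj
  have hnj' : (n:ℝ) + 1 ≤ j := by exact_mod_cast hnj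
  -- A run of equal digits has length `o(j)`, since the digit density lies strictly inside `(0, 1)`.
  have hshort : (j - (n + 1)) * Real.log 2 ≤ ρ/4 * j := by
    have hb' : ∀ k ∈ Finset.Ico (n+1) j, (ε (k+1) : ℝ) = b := fun k hk => by
      exact_mod_cast hb k hk
    have h := hrun (n+1) j (by omega) hnj b hb'
    have hbd : c ≤ |(b:ℝ) - d| := min_le_abs_natCast_sub d b
    push_cast at h
    have h' : c * (j - (n + 1)) ≤ c * ρ / (4 * Real.log 2) * j :=
      (mul_le_mul_of_nonneg_right hbd (by linarith)).trans h
    rw [div_mul_eq_mul_div, le_div_iff₀ (by positivity)] at h'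
    nlinarith
  have hwj : (μ - ρ/4) * j ≤ Real.log (cylinderWeight a ε j) :=
    (le_div_iff₀ hj0).1 (hw j (by omega))
  have hpos := cylinderWeight_pos (ε := ε) ha0 ha1 j
  calc C ≤ Real.exp (ρ/2 * n - Real.log 2) := hC n (by omega)
    _ ≤ Real.exp (Real.log (2 ^ n * cylinderWeight a ε j)) := by
      rw [Real.log_mul (by positivity) hpos.ne', Real.log_pow]
      gcongr
      nlinarith
    _ = 2 ^ n * cylinderWeight a ε j := Real.exp_log (by positivity)

theorem exists_digit_after {ε : ℕ → ℕ} {b : ℕ} (hinf : ∀ N, ∃ n ≥ N, ε n = b) (i : ℕ) :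
    ∃ j ≥ i, ε (j+1) = b ∧ ∀ k ∈ Finset.Ico i j, ε (k+1) ≠ b := by
  have hex : ∃ j, i ≤ j ∧ ε (j+1) = b := by
    obtain ⟨n, hn, hb⟩ := hinf (i+1)
    exact ⟨n - 1, by omega, by rwa [Nat.sub_add_cancel (by omega)]⟩
  obtain ⟨hi, hb⟩ := Nat.find_spec hex
  refine ⟨Nat.find hex, hi, hb, fun k hk hkb => ?_⟩
  rw [Finset.mem_Ico] at hk
  exact Nat.find_min hex hk.2 ⟨hk.1, hkb⟩

theorem tsum_mem_Ioo {ε : ℕ → ℕ} (hε : ∀ n, ε n ≤ 1) (hinf1 : ∀ N, ∃ n ≥ N, ε n = 1)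
    (hinf0 : ∀ N, ∃ n ≥ N, ε n = 0) : ∑' n, (ε (n+1) : ℝ) / 2 ^ (n+1) ∈ Ioo 0 1 := by
  obtain ⟨i, -, hi, -⟩ := exists_digit_after hinf1 0
  obtain ⟨j, -, hj, -⟩ := exists_digit_after hinf0 0
  have hlow := (tsum_mem_Icc_dyadicTrunc hε (i+1)).1
  have hupp := (tsum_mem_Icc_dyadicTrunc hε (j+1)).2
  rw [dyadicTrunc_succ, hi] at hlow
  rw [dyadicTrunc_succ, hj, pow_succ] at hupp
  have hi0 := dyadicTrunc_nonneg (ε := ε) i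
  have hj1 := dyadicTrunc_add_le_one hε j
  have h2 : (0:ℝ) < 2 ^ j := by positivity
  simp only [Nat.cast_one, Nat.cast_zero, zero_div, add_zero] at hlow hupp
  constructor
  · have : (0:ℝ) < 1 / 2 ^ (i+1) := by positivity
    linarith
  · have : 1 / (2 ^ j * 2) < (1:ℝ) / 2 ^ j := by
      rw [div_lt_div_iff₀ (by positivity) h2]; linarith
    linarith

theorem exists_ge_mem_Icc_one_div_two_pow {t : ℝ} {N : ℕ} (ht : 0 < t) (htN : t < 1 / 2 ^ N) :
    ∃ n ≥ N, t ∈ Icc (1 / 2 ^ (n+1)) (1 / 2 ^ n) := by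
  obtain ⟨n, hn, hn1⟩ := exists_nat_pow_near (one_le_one_div ht (htN.le.trans
    (div_le_one_of_le₀ (one_le_pow₀ one_le_two) (by positivity)))) one_lt_two
  refine ⟨n, ?_, (one_div_le (by positivity) ht).2 hn1.le, (le_one_div ht (by positivity)).2 hn⟩
  by_contra! hlt
  have := pow_le_pow_right₀ (one_le_two (α := ℝ)) (show n + 1 ≤ N from hlt)
  linarith [(lt_one_div ht (pow_pos two_pos N)).1 htN]

namespace deRham

variable {a : ℝ} {L : ℝ → ℝ} {ε : ℕ → ℕ}

theorem exists_run_le_slope (hL : deRham a L) (ha0 : 0 < a) (ha1 : a < 1) (hε : ∀ n, ε n ≤ 1)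
    (hinf1 : ∀ N, ∃ n ≥ N, ε n = 1) (hinf0 : ∀ N, ∃ n ≥ N, ε n = 0)
    {x : ℝ} (hx : x = ∑' n : ℕ, (ε (n+1) : ℝ) / 2 ^ (n+1))
    {h : ℝ} (hh : h ≠ 0) (hxh : x + h ∈ Icc 0 1) {n : ℕ}
    (hn : |h| ∈ Icc (1 / 2 ^ (n+1)) (1 / 2 ^ n)) :
    ∃ j b : ℕ, n < j ∧ (∀ k ∈ Finset.Ico (n+1) j, ε (k+1) = b) ∧
      min a (1 - a) * (2 ^ n * cylinderWeight a ε j) ≤ (L (x+h) - L x) / h := by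
  have hcyl : ∀ m, x ∈ Icc (dyadicTrunc ε m) (dyadicTrunc ε m + 1 / 2 ^ m) :=
    fun m => hx ▸ tsum_mem_Icc_dyadicTrunc hε m
  have hx01 : x ∈ Icc 0 1 := by simpa [dyadicTrunc] using hcyl 0
  have hdiv : ∀ {c Δ t : ℝ}, 0 ≤ c → c ≤ Δ → 0 < t → t ≤ 1 / 2 ^ n → 2 ^ n * c ≤ Δ / t := by
    intro c Δ t hc hcΔ ht htn
    rw [le_div_iff₀ ht]
    rw [le_div_iff₀ (by positivity)] at htn
    nlinarith
  have hw := fun j => cylinderWeight_pos (ε := ε) ha0 ha1 j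
  have hpow : ∀ {j}, n < j → (1:ℝ) / 2 ^ j ≤ 1 / 2 ^ (n+1) :=
    fun hnj => one_div_pow_le_one_div_pow_of_le one_le_two hnj
  rcases hh.lt_or_gt with hneg | hpos
  · rw [abs_of_neg hneg] at hn
    obtain ⟨j, hnj, hj, hrun⟩ := exists_digit_after hinf1 (n+1)
    refine ⟨j, 0, hnj, fun k hk => by have := hrun k hk; have := hε (k+1); omega, ?_⟩
    have hxh' : x + h ≤ dyadicTrunc ε j := by linarith [(hcyl j).2, hpow hnj, hn.1]
    have hΔ := hL.mul_cylinderWeight_le_sub_of_digit_eq_one ha0 ha1 hε hj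
      ⟨(hcyl (j+1)).1, hx01.2⟩ ⟨hxh.1, hxh'⟩
    calc min a (1 - a) * (2 ^ n * cylinderWeight a ε j)
        ≤ 2 ^ n * (a * cylinderWeight a ε j) := by
          rw [mul_left_comm]; gcongr; exacts [(hw j).le, min_le_left _ _]
      _ ≤ (L x - L (x+h)) / -h := hdiv (mul_pos ha0 (hw j)).le hΔ (by linarith) hn.2
      _ = (L (x+h) - L x) / h := by rw [← neg_sub, neg_div_neg_eq]
  · rw [abs_of_pos hpos] at hn
    obtain ⟨j, hnj, hj, hrun⟩ := exists_digit_after hinf0 (n+1)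
    refine ⟨j, 1, hnj, fun k hk => by have := hrun k hk; have := hε (k+1); omega, ?_⟩
    have hxh' : dyadicTrunc ε j + 1 / 2 ^ j ≤ x + h := by linarith [(hcyl j).1, hpow hnj, hn.1]
    have hΔ := hL.mul_cylinderWeight_le_sub_of_digit_eq_zero ha0 ha1 hε hj
      ⟨hx01.1, (hcyl (j+1)).2⟩ ⟨hxh', hxh.2⟩
    calc min a (1 - a) * (2 ^ n * cylinderWeight a ε j)
        ≤ 2 ^ n * ((1 - a) * cylinderWeight a ε j) := by
          rw [mul_left_comm]; gcongr; exacts [(hw j).le, min_le_right _ _]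
      _ ≤ (L (x+h) - L x) / h := hdiv (mul_pos (by linarith) (hw j)).le hΔ hpos hn.2

end deRham

theorem deriv_top_of_density_general (a : ℝ) (ha0 : 0 < a) (ha1 : a < 1)
    (L : ℝ → ℝ) (hL : deRham a L)
    (ε : ℕ → ℕ) (hε : ∀ n, ε n ≤ 1)
    (hinf1 : ∀ N, ∃ n ≥ N, ε n = 1) (hinf0 : ∀ N, ∃ n ≥ N, ε n = 0)
    (x : ℝ) (hx : x = ∑' n : ℕ, (ε (n+1) : ℝ) / 2 ^ (n+1))
    (d : ℝ)
    (hd : Tendsto (fun n : ℕ => (∑ k ∈ Finset.range n, (ε (k+1) : ℝ)) / n)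
      atTop (𝓝 d))
    (hd0 : 0 < d) (hd1 : d < 1)
    (hcrit : a ^ (1 - d) * (1-a) ^ d > 1/2) :
    Tendsto (fun h : ℝ => (L (x+h) - L x) / h) (𝓝[≠] 0) atTop := by
  have hm : 0 < min a (1 - a) := lt_min ha0 (by linarith)
  have hxI : x ∈ Ioo 0 1 := hx ▸ tsum_mem_Ioo hε hinf1 hinf0
  rw [tendsto_atTop]
  intro C
  obtain ⟨N, hN⟩ := exists_le_two_pow_mul_cylinderWeight ha0 ha1 hε hd hd0 hd1 hcrit
    (C / min a (1 - a))
  have hsmall : ∀ᶠ h in 𝓝 (0:ℝ), |h| < 1 / 2 ^ N := by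
    simpa using eventually_abs_sub_lt (0:ℝ) (show (0:ℝ) < 1 / 2 ^ N by positivity)
  have hnear : ∀ᶠ h in 𝓝 (0:ℝ), x + h ∈ Icc 0 1 :=
    (continuous_const.add continuous_id).tendsto' 0 x (add_zero x) |>.eventually
      (Icc_mem_nhds hxI.1 hxI.2)
  filter_upwards [nhdsWithin_le_nhds hsmall, nhdsWithin_le_nhds hnear, self_mem_nhdsWithin]
    with h hhN hxh hh
  obtain ⟨n, hNn, hn⟩ := exists_ge_mem_Icc_one_div_two_pow (abs_pos.2 hh) hhN
  obtain ⟨j, b, hnj, hrun, hslope⟩ :=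
    hL.exists_run_le_slope ha0 ha1 hε hinf1 hinf0 hx hh hxh hn
  calc C = min a (1 - a) * (C / min a (1 - a)) := (mul_div_cancel₀ _ hm.ne').symm
    _ ≤ min a (1 - a) * (2 ^ n * cylinderWeight a ε j) := by
      gcongr; exact hN n j b hNn hnj hrun
    _ ≤ (L (x+h) - L x) / h := hslope

theorem deriv_top_of_density (a : ℝ) (ha0 : 0 < a) (ha1 : a < 1)
    (ha : a ≠ 1/2) (L : ℝ → ℝ) (hL : deRham a L)
    (ε : ℕ → ℕ) (hε : ∀ n, ε n ≤ 1)
    (hinf1 : ∀ N, ∃ n ≥ N, ε n = 1) (hinf0 : ∀ N, ∃ n ≥ N, ε n = 0)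
    (x : ℝ) (hx : x = ∑' n : ℕ, (ε (n+1) : ℝ) / 2 ^ (n+1))
    (d : ℝ)
    (hd : Tendsto (fun n : ℕ => (∑ k ∈ Finset.range n, (ε (k+1) : ℝ)) / n)
      atTop (𝓝 d))
    (hd0 : 0 < d) (hd1 : d < 1)
    (hcrit : a ^ (1 - d) * (1-a) ^ d > 1/2) :
    Tendsto (fun h : ℝ => (L (x+h) - L x) / h) (𝓝[≠] 0) atTop :=
  deriv_top_of_density_general a ha0 ha1 L hL ε hε hinf1 hinf0 x hx d hd hd0 hd1 hcrit
end

section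
/- Let y = L_a^{-1}(x). If D_1(y) exists with 0 < D_1(y) < 1 and a^{D_0(y)}(1-a)^{D_1(y)} > 1/2, then the composition T ∘ L_a^{-1} has derivative 0 at x, where T is Takagi's function. -/
open Topology Filter Set

/-!
Write `y = L⁻¹ x = 0.e₀e₁e₂…` in binary and let `sₙ = 0.e₀…eₙ₋₁` (`dyadicPartial`). The de Rham
equations make `L` self-similar: `L (sₙ + t / 2ⁿ) = L sₙ + Wₙ · L t`, where
`Wₙ = ∏_{i<n} (e_i = 1 ? 1 - a : a)` (`dyadicMass`).
Since the digit 1 has density `d`, `Wₙ ≥ exp (θ n)` eventually for every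
`θ < (1 - d) log a + d log (1 - a)`, and the hypothesis `a^(1-d) (1-a)^d > 1/2` says exactly that
some such `θ` exceeds `-log 2`. Takagi's function satisfies `|T u - T v| ≤ n |u - v| + 2⁻ⁿ`.

Take `z < y` with `sₙ ≤ z < sₙ₊₁`, so `|T z - T y| ≤ (n + 1) / 2ⁿ`. If `m` is the first position
after `n` carrying the digit 1, then `[sₘ, sₘ₊₁]` lies between `z` and `y`, so
`L y - L z ≥ a Wₘ`. The digits strictly between `n` and `m` are all `0`, and as 1 has positive
density, `m ≤ ρ (n + 1)` for any `ρ > 1` once `n` is large; thus `(n + 1) / 2ⁿ = o(a Wₘ)`.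
For `z > y` apply the same argument to the mirror image `t ↦ 1 - t`, which swaps the digits and
`a` with `1 - a` and leaves `T` unchanged.
-/

open Real

noncomputable def takagiTerm (k : ℕ) (z : ℝ) : ℝ := |2 ^ k * z - round (2 ^ k * z)| / 2 ^ k

noncomputable def takagi (z : ℝ) : ℝ := ∑' k : ℕ, takagiTerm k z

lemma lipschitzWith_abs_sub_round : LipschitzWith 1 fun x : ℝ => |x - round x| :=
  .of_le_add fun x y => by
    have := round_le x (round y)
    rw [Real.dist_eq]
    linarith [abs_sub_le x y (round y)]

lemma abs_intCast_sub_sub_round (n : ℤ) (x : ℝ) :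
    |(n - x) - round (n - x)| = |x - round x| := by
  apply le_antisymm
  · calc |(n - x) - round (n - x)| ≤ |(n - x) - ((n - round x : ℤ) : ℝ)| := round_le _ _
      _ = |x - round x| := by rw [abs_sub_comm]; push_cast; ring_nf
  · calc |x - round x| ≤ |x - ((n - round (n - x) : ℤ) : ℝ)| := round_le _ _
      _ = |(n - x) - round (n - x)| := by rw [abs_sub_comm]; push_cast; ring_nf

lemma hasSum_one_div_two_pow_succ : HasSum (fun k : ℕ => (1 : ℝ) / 2 ^ (k + 1)) 1 := by
  convert hasSum_geometric_two' 1 using 1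
  funext k
  ring

lemma takagiTerm_nonneg (k : ℕ) (z : ℝ) : 0 ≤ takagiTerm k z := by
  unfold takagiTerm
  positivity

lemma takagiTerm_le (k : ℕ) (z : ℝ) : takagiTerm k z ≤ 1 / 2 ^ (k + 1) := by
  unfold takagiTerm
  rw [div_le_iff₀ (by positivity), pow_succ]
  field_simp
  linarith [abs_sub_round (2 ^ k * z)]

lemma abs_takagiTerm_sub_le (k : ℕ) (u v : ℝ) :
    |takagiTerm k u - takagiTerm k v| ≤ |u - v| := by
  have h := lipschitzWith_abs_sub_round.dist_le_mul (2 ^ k * u) (2 ^ k * v)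
  rw [Real.dist_eq, Real.dist_eq, NNReal.coe_one, one_mul, ← mul_sub, abs_mul,
    abs_of_pos (by positivity : (0 : ℝ) < 2 ^ k)] at h
  rw [takagiTerm, takagiTerm, ← sub_div, abs_div, abs_of_pos (by positivity : (0 : ℝ) < 2 ^ k),
    div_le_iff₀ (by positivity)]
  linarith

lemma summable_takagiTerm (z : ℝ) : Summable (takagiTerm · z) :=
  .of_nonneg_of_le (takagiTerm_nonneg · z) (takagiTerm_le · z)
    hasSum_one_div_two_pow_succ.summable

lemma abs_takagi_sub_le (u v : ℝ) (n : ℕ) :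
    |takagi u - takagi v| ≤ n * |u - v| + 1 / 2 ^ n := by
  set g : ℕ → ℝ := fun k => takagiTerm k u - takagiTerm k v
  have hg : Summable g := (summable_takagiTerm u).sub (summable_takagiTerm v)
  have hhead : |∑ k ∈ Finset.range n, g k| ≤ n * |u - v| := by
    refine (Finset.abs_sum_le_sum_abs _ _).trans ?_
    exact (Finset.sum_le_sum fun k _ => abs_takagiTerm_sub_le k u v).trans_eq (by simp)
  have htail : |∑' k, g (k + n)| ≤ 1 / 2 ^ n := by
    refine tsum_of_norm_bounded (f := fun k => g (k + n))
      (hasSum_geometric_two' (1 / 2 ^ n)) fun k => ?_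
    calc ‖g (k + n)‖ ≤ 1 / 2 ^ (k + n + 1) :=
          abs_sub_le_of_nonneg_of_le (takagiTerm_nonneg _ _) (takagiTerm_le _ _)
            (takagiTerm_nonneg _ _) (takagiTerm_le _ _)
      _ = 1 / 2 ^ n / 2 / 2 ^ k := by rw [pow_succ, pow_add]; field_simp
  calc |takagi u - takagi v| = |∑ k ∈ Finset.range n, g k + ∑' k, g (k + n)| := by
        rw [hg.sum_add_tsum_nat_add, takagi, takagi,
          (summable_takagiTerm u).tsum_sub (summable_takagiTerm v)]
    _ ≤ n * |u - v| + 1 / 2 ^ n := (abs_add_le _ _).trans (add_le_add hhead htail)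

lemma takagi_one_sub (z : ℝ) : takagi (1 - z) = takagi z := by
  refine tsum_congr fun k => ?_
  have h := abs_intCast_sub_sub_round (2 ^ k) (2 ^ k * z)
  push_cast at h
  rw [takagiTerm, takagiTerm, mul_one_sub, h]

lemma Nat.exists_ge_forall_Ico_not {p : ℕ → Prop} {k : ℕ} (h : ∃ m ≥ k, p m) :
    ∃ m ≥ k, p m ∧ ∀ j ∈ Finset.Ico k m, ¬ p j := by
  classical
  refine ⟨Nat.find h, (Nat.find_spec h).1, (Nat.find_spec h).2, fun j hj hpj => ?_⟩
  rw [Finset.mem_Ico] at hj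
  exact Nat.find_min h hj.2 ⟨hj.1, hpj⟩

lemma exists_le_lt_succ_of_tendsto {s : ℕ → ℝ} {y z : ℝ} {N : ℕ}
    (hs : Tendsto s atTop (𝓝 y)) (hNz : s N ≤ z) (hzy : z < y) :
    ∃ n ≥ N, s n ≤ z ∧ z < s (n + 1) := by
  obtain ⟨k₀, hzk₀, hNk₀⟩ := ((hs.eventually_const_lt hzy).and (eventually_ge_atTop N)).exists
  obtain ⟨k, hNk, hzk, hfirst⟩ :=
    Nat.exists_ge_forall_Ico_not (p := fun k => z < s k) ⟨k₀, hNk₀, hzk₀⟩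
  have hNk' : N < k := hNk.lt_of_ne fun h => by subst h; linarith
  obtain ⟨n, rfl⟩ : ∃ n, k = n + 1 := Nat.exists_eq_add_one.2 (by omega)
  exact ⟨n, by omega, not_lt.1 (hfirst n (Finset.mem_Ico.2 ⟨by omega, by omega⟩)), hzk⟩

lemma Finset.sum_range_eq_of_forall_Ico_eq_zero {M : Type*} [AddCommMonoid M] {f : ℕ → M}
    {k m : ℕ} (hkm : k ≤ m) (h : ∀ j ∈ Finset.Ico k m, f j = 0) :
    ∑ i ∈ Finset.range m, f i = ∑ i ∈ Finset.range k, f i := by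
  rw [← Finset.sum_range_add_sum_Ico f hkm, Finset.sum_eq_zero h, add_zero]

noncomputable def dyadicPartial (e : ℕ → ℕ) (n : ℕ) : ℝ :=
  ∑ i ∈ Finset.range n, (e i : ℝ) / 2 ^ (i + 1)

noncomputable def dyadicValue (e : ℕ → ℕ) : ℝ := ∑' i, (e i : ℝ) / 2 ^ (i + 1)

section Digits

variable {e : ℕ → ℕ}

lemma dyadicPartial_zero : dyadicPartial e 0 = 0 := Finset.sum_range_zero _

lemma dyadicPartial_succ (n : ℕ) :
    dyadicPartial e (n + 1) = dyadicPartial e n + e n / 2 ^ (n + 1) :=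
  Finset.sum_range_succ _ n

lemma dyadicPartial_succ' (n : ℕ) :
    dyadicPartial e (n + 1) = (e 0 + dyadicPartial (fun i => e (i + 1)) n) / 2 := by
  rw [dyadicPartial, Finset.sum_range_succ', add_comm, add_div, dyadicPartial, Finset.sum_div]
  congr 1
  · simp
  · refine Finset.sum_congr rfl fun i _ => ?_
    rw [pow_succ]
    ring

lemma dyadicPartial_monotone : Monotone (dyadicPartial e) :=
  monotone_nat_of_le_succ fun n => by
    rw [dyadicPartial_succ, le_add_iff_nonneg_right]
    positivity

lemma dyadicPartial_nonneg (n : ℕ) : 0 ≤ dyadicPartial e n :=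
  dyadicPartial_zero (e := e) ▸ dyadicPartial_monotone n.zero_le

lemma dyadicPartial_eq_of_forall_Ico_eq_zero {k m : ℕ} (hkm : k ≤ m)
    (h : ∀ j ∈ Finset.Ico k m, e j = 0) : dyadicPartial e m = dyadicPartial e k :=
  Finset.sum_range_eq_of_forall_Ico_eq_zero hkm fun j hj => by simp [h j hj]

lemma antitone_dyadicPartial_add (he : ∀ i, e i ≤ 1) :
    Antitone fun n => dyadicPartial e n + 1 / 2 ^ n := by
  refine antitone_nat_of_succ_le fun n => ?_
  have : (e n : ℝ) ≤ 1 := by exact_mod_cast he n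
  rw [dyadicPartial_succ, pow_succ]
  field_simp
  linarith

lemma dyadicPartial_add_le_one (he : ∀ i, e i ≤ 1) (n : ℕ) :
    dyadicPartial e n + 1 / 2 ^ n ≤ 1 := by
  simpa [dyadicPartial_zero] using antitone_dyadicPartial_add he n.zero_le

lemma dyadicPartial_mem_Icc (he : ∀ i, e i ≤ 1) (n : ℕ) : dyadicPartial e n ∈ Icc 0 1 :=
  ⟨dyadicPartial_nonneg n, by
    linarith [dyadicPartial_add_le_one he n, one_div_pos.2 (pow_pos (two_pos (α := ℝ)) n)]⟩

lemma hasSum_dyadicValue (he : ∀ i, e i ≤ 1) :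
    HasSum (fun i => (e i : ℝ) / 2 ^ (i + 1)) (dyadicValue e) :=
  (Summable.of_nonneg_of_le (fun _ => by positivity)
    (fun i => div_le_div_of_nonneg_right (by exact_mod_cast he i) (by positivity))
    hasSum_one_div_two_pow_succ.summable).hasSum

lemma tendsto_dyadicPartial (he : ∀ i, e i ≤ 1) :
    Tendsto (dyadicPartial e) atTop (𝓝 (dyadicValue e)) :=
  (hasSum_dyadicValue he).tendsto_sum_nat

lemma dyadicPartial_le_dyadicValue (he : ∀ i, e i ≤ 1) (n : ℕ) :
    dyadicPartial e n ≤ dyadicValue e :=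
  dyadicPartial_monotone.ge_of_tendsto (tendsto_dyadicPartial he) n

lemma dyadicValue_le_dyadicPartial_add (he : ∀ i, e i ≤ 1) (n : ℕ) :
    dyadicValue e ≤ dyadicPartial e n + 1 / 2 ^ n := by
  refine (antitone_dyadicPartial_add he).le_of_tendsto ?_ n
  simpa using (tendsto_dyadicPartial he).add
    (tendsto_pow_atTop_nhds_zero_of_lt_one (by norm_num : (0 : ℝ) ≤ 1 / 2) (by norm_num))

lemma dyadicPartial_lt_dyadicValue (he : ∀ i, e i ≤ 1) {n : ℕ} (h : ∃ m ≥ n, e m = 1) :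
    dyadicPartial e n < dyadicValue e := by
  obtain ⟨m, hnm, hm⟩ := h
  calc dyadicPartial e n ≤ dyadicPartial e m := dyadicPartial_monotone hnm
    _ < dyadicPartial e (m + 1) := by rw [dyadicPartial_succ, hm]; simp
    _ ≤ dyadicValue e := dyadicPartial_le_dyadicValue he _

lemma dyadicValue_mem_Icc (he : ∀ i, e i ≤ 1) : dyadicValue e ∈ Icc 0 1 :=
  ⟨(dyadicPartial_nonneg 0).trans (dyadicPartial_le_dyadicValue he 0),
    (dyadicValue_le_dyadicPartial_add he 0).trans (dyadicPartial_add_le_one he 0)⟩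

lemma sum_range_one_sub (he : ∀ i, e i ≤ 1) (n : ℕ) :
    ∑ i ∈ Finset.range n, ((1 - e i : ℕ) : ℝ) = n - ∑ i ∈ Finset.range n, (e i : ℝ) := by
  simp [Finset.sum_congr rfl fun i _ => Nat.cast_sub (he i), Finset.sum_sub_distrib]

lemma dyadicValue_one_sub (he : ∀ i, e i ≤ 1) :
    dyadicValue (fun i => 1 - e i) = 1 - dyadicValue e := by
  refine (hasSum_one_div_two_pow_succ.sub (hasSum_dyadicValue he)).tsum_eq ▸
    tsum_congr fun i => ?_
  rw [Nat.cast_sub (he i), sub_div, Nat.cast_one]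

lemma dyadicValue_mem_Ioo (he : ∀ i, e i ≤ 1) (hinf1 : ∀ N, ∃ n ≥ N, e n = 1)
    (hinf0 : ∀ N, ∃ n ≥ N, e n = 0) : dyadicValue e ∈ Ioo 0 1 := by
  have h0 := dyadicPartial_lt_dyadicValue he (hinf1 0)
  have h1 := dyadicPartial_lt_dyadicValue (e := fun i => 1 - e i) (fun i => Nat.sub_le 1 (e i))
    ((hinf0 0).imp fun n ⟨hn, h⟩ => ⟨hn, by omega⟩)
  rw [dyadicPartial_zero] at h0 h1
  rw [dyadicValue_one_sub he] at h1
  exact ⟨h0, by linarith⟩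

end Digits

noncomputable def dyadicMass (a : ℝ) (e : ℕ → ℕ) (n : ℕ) : ℝ :=
  ∏ i ∈ Finset.range n, if e i = 1 then 1 - a else a

namespace deRham

variable {a : ℝ} {L : ℝ → ℝ}

lemma apply_zero (ha1 : a < 1) (hL : deRham a L) : L 0 = 0 := by
  have h := hL.2.1 0 (by norm_num)
  rw [mul_zero] at h
  nlinarith

lemma apply_one (ha0 : 0 < a) (hL : deRham a L) : L 1 = 1 := by
  have h := hL.2.2 1 (by norm_num)
  norm_num at h
  nlinarith

lemma apply_half (ha0 : 0 < a) (hL : deRham a L) : L (1 / 2) = a := by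
  rw [hL.2.1 _ (by norm_num), mul_one_div_cancel two_ne_zero, hL.apply_one ha0, mul_one]

lemma surjOn (ha0 : 0 < a) (ha1 : a < 1) (hL : deRham a L) : SurjOn L (Icc 0 1) (Icc 0 1) := by
  have h := intermediate_value_Icc zero_le_one hL.1
  rwa [hL.apply_zero ha1, hL.apply_one ha0] at h

lemma apply_digit_add_div_two (ha0 : 0 < a) (ha1 : a < 1) (hL : deRham a L) {δ : ℕ}
    (hδ : δ ≤ 1) {u : ℝ} (hu : u ∈ Icc 0 1) :
    L ((δ + u) / 2) = L (δ / 2) + (if δ = 1 then 1 - a else a) * L u := by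
  obtain ⟨hu0, hu1⟩ := hu
  rcases Nat.le_one_iff_eq_zero_or_eq_one.1 hδ with rfl | rfl
  · simp only [Nat.cast_zero, zero_add, zero_div, hL.apply_zero ha1, if_neg zero_ne_one]
    rw [hL.2.1 _ ⟨by positivity, by linarith⟩, mul_div_cancel₀ u two_ne_zero]
  · simp only [Nat.cast_one, ite_true, hL.apply_half ha0]
    rw [hL.2.2 _ ⟨by linarith, by linarith⟩, show 2 * ((1 + u) / 2) - 1 = u by ring]
    ring

lemma apply_dyadicPartial_add (ha0 : 0 < a) (ha1 : a < 1) (hL : deRham a L) (n : ℕ)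
    {e : ℕ → ℕ} (he : ∀ i, e i ≤ 1) {t : ℝ} (ht : t ∈ Icc 0 1) :
    L (dyadicPartial e n + t / 2 ^ n) = L (dyadicPartial e n) + dyadicMass a e n * L t := by
  induction n generalizing e with
  | zero => simp [dyadicPartial_zero, dyadicMass, hL.apply_zero ha1]
  | succ n ih =>
    set e' : ℕ → ℕ := fun i => e (i + 1)
    have he' : ∀ i, e' i ≤ 1 := fun i => he (i + 1)
    have hs : dyadicPartial e' n + t / 2 ^ n ∈ Icc 0 1 := by
      have := dyadicPartial_add_le_one he' n
      have : t / 2 ^ n ≤ 1 / 2 ^ n := by gcongr; exact ht.2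
      exact ⟨add_nonneg (dyadicPartial_nonneg n) (div_nonneg ht.1 (by positivity)), by linarith⟩
    have hsplit : dyadicPartial e (n + 1) + t / 2 ^ (n + 1)
        = (e 0 + (dyadicPartial e' n + t / 2 ^ n)) / 2 := by
      rw [dyadicPartial_succ', pow_succ]
      ring
    rw [hsplit, hL.apply_digit_add_div_two ha0 ha1 (he 0) hs, ih he', dyadicPartial_succ',
      hL.apply_digit_add_div_two ha0 ha1 (he 0) (dyadicPartial_mem_Icc he' n)]
    simp only [dyadicMass, Finset.prod_range_succ', e']
    ring

lemma apply_dyadicPartial_succ_sub (ha0 : 0 < a) (ha1 : a < 1) (hL : deRham a L)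
    {e : ℕ → ℕ} (he : ∀ i, e i ≤ 1) {m : ℕ} (hm : e m = 1) :
    L (dyadicPartial e (m + 1)) - L (dyadicPartial e m) = a * dyadicMass a e m := by
  have h := hL.apply_dyadicPartial_add ha0 ha1 m he (t := 1 / 2) ⟨by norm_num, by norm_num⟩
  rw [hL.apply_half ha0, div_div, ← pow_succ'] at h
  rw [dyadicPartial_succ, hm, Nat.cast_one, h]
  ring

lemma reflect (hL : deRham a L) : deRham (1 - a) fun t => 1 - L (1 - t) := by
  obtain ⟨hcont, hleft, hright⟩ := hL
  refine ⟨?_, fun t ht => ?_, fun t ht => ?_⟩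
  · exact continuousOn_const.sub
      (hcont.comp (by fun_prop) fun t ht => Icc.mem_iff_one_sub_mem.1 ht)
  · dsimp only
    rw [hright _ ⟨by linarith [ht.2], by linarith [ht.1]⟩,
      show 2 * (1 - t) - 1 = 1 - 2 * t by ring]
    ring
  · dsimp only
    rw [hleft _ ⟨by linarith [ht.2], by linarith [ht.1]⟩,
      show 1 - (2 * t - 1) = 2 * (1 - t) by ring]
    ring

end deRham

section Asymptotics

variable {a d : ℝ} {e : ℕ → ℕ}

lemma dyadicMass_pos (ha0 : 0 < a) (ha1 : a < 1) (n : ℕ) : 0 < dyadicMass a e n :=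
  Finset.prod_pos fun i _ => by split_ifs <;> linarith

lemma log_dyadicMass (ha0 : 0 < a) (ha1 : a < 1) (he : ∀ i, e i ≤ 1) (n : ℕ) :
    log (dyadicMass a e n) = (n - ∑ i ∈ Finset.range n, (e i : ℝ)) * log a
      + (∑ i ∈ Finset.range n, (e i : ℝ)) * log (1 - a) := by
  have hdigit : ∀ i,
      log (if e i = 1 then 1 - a else a) = (1 - e i) * log a + e i * log (1 - a) := fun i => by
    rcases Nat.le_one_iff_eq_zero_or_eq_one.1 (he i) with h | h <;> simp [h]
  rw [dyadicMass, log_prod fun i _ => by split_ifs <;> linarith,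
    Finset.sum_congr rfl fun i _ => hdigit i, Finset.sum_add_distrib, ← Finset.sum_mul,
    ← Finset.sum_mul, Finset.sum_sub_distrib]
  simp

lemma eventually_exp_mul_le_dyadicMass (ha0 : 0 < a) (ha1 : a < 1) (he : ∀ i, e i ≤ 1)
    (hd : Tendsto (fun n : ℕ => (∑ i ∈ Finset.range n, (e i : ℝ)) / n) atTop (𝓝 d)) {θ : ℝ}
    (hθ : θ < (1 - d) * log a + d * log (1 - a)) :
    ∀ᶠ n : ℕ in atTop, exp (θ * n) ≤ dyadicMass a e n := by
  have hlim : Tendsto (fun n : ℕ => (1 - (∑ i ∈ Finset.range n, (e i : ℝ)) / n) * log a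
      + (∑ i ∈ Finset.range n, (e i : ℝ)) / n * log (1 - a)) atTop
      (𝓝 ((1 - d) * log a + d * log (1 - a))) :=
    ((tendsto_const_nhds.sub hd).mul_const _).add (hd.mul_const _)
  filter_upwards [hlim.eventually (lt_mem_nhds hθ), eventually_gt_atTop 0] with n hn hn0
  have hn0' : (0 : ℝ) < n := by exact_mod_cast hn0
  rw [← exp_log (dyadicMass_pos ha0 ha1 n), exp_le_exp, log_dyadicMass ha0 ha1 he]
  calc θ * n ≤ ((1 - (∑ i ∈ Finset.range n, (e i : ℝ)) / n) * log a
      + (∑ i ∈ Finset.range n, (e i : ℝ)) / n * log (1 - a)) * n := by gcongr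
    _ = _ := by field_simp

lemma eventually_le_mul_of_eq_of_tendsto_div {S : ℕ → ℝ} {ρ : ℝ}
    (hS : Tendsto (fun n : ℕ => S n / n) atTop (𝓝 d)) (hd : 0 < d) (hρ : 1 < ρ) :
    ∀ᶠ k in atTop, ∀ m ≥ k, S m = S k → (m : ℝ) ≤ ρ * k := by
  obtain ⟨u, hdu, huρ⟩ := exists_between (lt_mul_of_one_lt_left hd hρ)
  obtain ⟨l, hul, hld⟩ := exists_between ((div_lt_iff₀' (by linarith)).2 huρ)
  have hul' : u < ρ * l := (div_lt_iff₀' (by linarith)).1 hul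
  have hl0 : 0 < l := (div_pos (by linarith) (by linarith)).trans hul
  have hev := eventually_forall_ge_atTop.2
    ((hS.eventually (Ioo_mem_nhds hld hdu)).and (eventually_gt_atTop 0))
  filter_upwards [hev] with k hk m hkm hSm
  obtain ⟨⟨hlm, -⟩, hm0⟩ := hk m hkm
  obtain ⟨⟨-, hku⟩, hk0⟩ := hk k le_rfl
  rw [lt_div_iff₀ (by exact_mod_cast hm0)] at hlm
  rw [div_lt_iff₀ (by exact_mod_cast hk0)] at hku
  have hk0' : (0 : ℝ) < k := by exact_mod_cast hk0
  nlinarith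

lemma eventually_succ_div_two_pow_le {β η : ℝ} (hβ : 1 / 2 < β) (hη : 0 < η) :
    ∀ᶠ n : ℕ in atTop, (n + 1 : ℝ) / 2 ^ n ≤ η * β ^ n := by
  set r := 1 / (2 * β) with hr
  have hr0 : 0 ≤ r := by positivity
  have hr1 : r < 1 := by rw [div_lt_one (by linarith)]; linarith
  have hlim : Tendsto (fun n : ℕ => (n + 1) * r ^ n) atTop (𝓝 0) := by
    simpa [add_mul] using (tendsto_self_mul_const_pow_of_lt_one hr0 hr1).add
      (tendsto_pow_atTop_nhds_zero_of_lt_one hr0 hr1)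
  filter_upwards [hlim.eventually (gt_mem_nhds hη)] with n hn
  calc (n + 1 : ℝ) / 2 ^ n = (n + 1) * r ^ n * β ^ n := by
        rw [mul_assoc, ← mul_pow, show r * β = 1 / 2 by rw [hr]; field_simp, div_pow, one_pow]
        field_simp
    _ ≤ η * β ^ n := by gcongr

lemma eventually_div_two_pow_le_dyadicMass (ha0 : 0 < a) (ha1 : a < 1) (he : ∀ i, e i ≤ 1)
    (hd : Tendsto (fun n : ℕ => (∑ i ∈ Finset.range n, (e i : ℝ)) / n) atTop (𝓝 d))
    (hd0 : 0 < d) (hcrit : 1 / 2 < a ^ (1 - d) * (1 - a) ^ d) {η : ℝ} (hη : 0 < η) :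
    ∀ᶠ n : ℕ in atTop, ∀ m ≥ n + 1, (∀ j ∈ Finset.Ico (n + 1) m, e j = 0) →
      (n + 1 : ℝ) / 2 ^ n ≤ η * dyadicMass a e m := by
  have hlog : -log 2 < (1 - d) * log a + d * log (1 - a) := by
    have h := log_lt_log (by norm_num) hcrit
    have h1a : 0 < 1 - a := by linarith
    rwa [log_mul (by positivity) (by positivity), log_rpow ha0, log_rpow h1a, one_div,
      log_inv] at h
  obtain ⟨θ', hθ'2, hθ'⟩ := exists_between (lt_min hlog (neg_neg_of_pos (log_pos one_lt_two)))
  obtain ⟨θ, hθ'θ, hθ⟩ := exists_between hθ'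
  have hθ0 : θ < 0 := hθ.trans_le (min_le_right _ _)
  have hρ : 1 < θ' / θ := (one_lt_div_of_neg hθ0).2 hθ'θ
  have hβ : 1 / 2 < exp θ' := by
    rw [one_div, ← exp_log (by norm_num : (0 : ℝ) < 2), ← exp_neg]
    exact exp_lt_exp.2 hθ'2
  filter_upwards [(tendsto_add_atTop_nat 1).eventually
      (eventually_le_mul_of_eq_of_tendsto_div hd hd0 hρ),
    (tendsto_add_atTop_nat 1).eventually (eventually_forall_ge_atTop.2
      (eventually_exp_mul_le_dyadicMass ha0 ha1 he hd (hθ.trans_le (min_le_left _ _)))),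
    eventually_succ_div_two_pow_le hβ (mul_pos hη (exp_pos θ'))]
    with n hrun hmass hsmall m hm hzero
  have hmρ : (m : ℝ) ≤ θ' / θ * (n + 1 : ℕ) :=
    hrun m hm (Finset.sum_range_eq_of_forall_Ico_eq_zero hm fun j hj => by simp [hzero j hj])
  calc (n + 1 : ℝ) / 2 ^ n ≤ η * exp θ' * exp θ' ^ n := hsmall
    _ = η * exp (θ * (θ' / θ * (n + 1 : ℕ))) := by
        rw [mul_assoc, ← pow_succ', ← exp_nat_mul, ← mul_assoc, mul_div_cancel₀ _ hθ0.ne,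
          mul_comm θ']
    _ ≤ η * exp (θ * m) := by
        gcongr η * exp ?_
        exact mul_le_mul_of_nonpos_left hmρ hθ0.le
    _ ≤ η * dyadicMass a e m := by gcongr; exact hmass m hm

end Asymptotics

section Derivative

variable {a d : ℝ} {L : ℝ → ℝ} {e : ℕ → ℕ}

lemma exists_abs_takagi_sub_le_of_lt (ha0 : 0 < a) (ha1 : a < 1) (hL : deRham a L)
    (hmono : StrictMonoOn L (Icc 0 1)) (he : ∀ i, e i ≤ 1) (hinf : ∀ N, ∃ n ≥ N, e n = 1)
    (hd : Tendsto (fun n : ℕ => (∑ i ∈ Finset.range n, (e i : ℝ)) / n) atTop (𝓝 d))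
    (hd0 : 0 < d) (hcrit : 1 / 2 < a ^ (1 - d) * (1 - a) ^ d) {η : ℝ} (hη : 0 < η) :
    ∃ δ > 0, ∀ z ∈ Icc 0 1, z < dyadicValue e → L (dyadicValue e) - L z < δ →
      |takagi z - takagi (dyadicValue e)| ≤ η * (L (dyadicValue e) - L z) := by
  set y := dyadicValue e
  set s := dyadicPartial e
  have hs : ∀ n, s n ∈ Icc 0 1 := dyadicPartial_mem_Icc he
  have hy : y ∈ Icc 0 1 := dyadicValue_mem_Icc he
  obtain ⟨N, hN⟩ := eventually_atTop.1
    (eventually_div_two_pow_le_dyadicMass ha0 ha1 he hd hd0 hcrit (mul_pos hη ha0))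
  have hsN : s N < y := dyadicPartial_lt_dyadicValue he (hinf N)
  refine ⟨L y - L (s N), sub_pos.2 (hmono (hs N) hy hsN), fun z hz hzy hLz => ?_⟩
  have hNz : s N < z := (hmono.lt_iff_lt (hs N) hz).1 (by linarith)
  obtain ⟨n, hNn, hsn, hzn⟩ := exists_le_lt_succ_of_tendsto (tendsto_dyadicPartial he) hNz.le hzy
  obtain ⟨m, hm, hem, hone⟩ := Nat.exists_ge_forall_Ico_not (hinf (n + 1))
  have hzero : ∀ j ∈ Finset.Ico (n + 1) m, e j = 0 := fun j hj => by
    have := he j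
    have := hone j hj
    omega
  have hmass : a * dyadicMass a e m ≤ L y - L z := by
    rw [← hL.apply_dyadicPartial_succ_sub ha0 ha1 he hem]
    refine sub_le_sub (hmono.monotoneOn (hs _) hy (dyadicPartial_le_dyadicValue he _))
      (hmono.monotoneOn hz (hs _) ?_)
    rw [dyadicPartial_eq_of_forall_Ico_eq_zero hm hzero]
    exact hzn.le
  have hzy : |z - y| ≤ 1 / 2 ^ n := by
    rw [abs_sub_comm, abs_of_pos (sub_pos.2 hzy)]
    linarith [dyadicValue_le_dyadicPartial_add he n]
  calc |takagi z - takagi y| ≤ n * |z - y| + 1 / 2 ^ n := abs_takagi_sub_le z y n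
    _ ≤ (n + 1) / 2 ^ n := by
        rw [add_div]
        gcongr
        exact (mul_le_mul_of_nonneg_left hzy n.cast_nonneg).trans_eq (mul_one_div _ _)
    _ ≤ η * a * dyadicMass a e m := hN n hNn m hm hzero
    _ ≤ η * (L y - L z) := by rw [mul_assoc]; gcongr

lemma exists_abs_takagi_sub_le (ha0 : 0 < a) (ha1 : a < 1) (hL : deRham a L)
    (hmono : StrictMonoOn L (Icc 0 1)) (he : ∀ i, e i ≤ 1) (hinf1 : ∀ N, ∃ n ≥ N, e n = 1)
    (hinf0 : ∀ N, ∃ n ≥ N, e n = 0)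
    (hd : Tendsto (fun n : ℕ => (∑ i ∈ Finset.range n, (e i : ℝ)) / n) atTop (𝓝 d))
    (hd0 : 0 < d) (hd1 : d < 1) (hcrit : 1 / 2 < a ^ (1 - d) * (1 - a) ^ d)
    {η : ℝ} (hη : 0 < η) :
    ∃ δ > 0, ∀ z ∈ Icc 0 1, |L z - L (dyadicValue e)| < δ →
      |takagi z - takagi (dyadicValue e)| ≤ η * |L z - L (dyadicValue e)| := by
  set y := dyadicValue e
  have hy : y ∈ Icc 0 1 := dyadicValue_mem_Icc he
  obtain ⟨δ₁, hδ₁, hleft⟩ :=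
    exists_abs_takagi_sub_le_of_lt ha0 ha1 hL hmono he hinf1 hd hd0 hcrit hη
  have hmono' : StrictMonoOn (fun t => 1 - L (1 - t)) (Icc 0 1) := fun u hu v hv huv =>
    sub_lt_sub_left (hmono (Icc.mem_iff_one_sub_mem.1 hv) (Icc.mem_iff_one_sub_mem.1 hu)
      (by linarith)) 1
  have hd' : Tendsto (fun n : ℕ => (∑ i ∈ Finset.range n, ((1 - e i : ℕ) : ℝ)) / n) atTop
      (𝓝 (1 - d)) := by
    refine (tendsto_const_nhds.sub hd).congr' ?_
    filter_upwards [eventually_ne_atTop 0] with n hn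
    rw [sum_range_one_sub he]
    field_simp
  obtain ⟨δ₂, hδ₂, hright⟩ := exists_abs_takagi_sub_le_of_lt (by linarith) (by linarith)
    hL.reflect hmono' (fun i => Nat.sub_le 1 (e i))
    (fun N => (hinf0 N).imp fun n ⟨hn, h⟩ => ⟨hn, by omega⟩) hd' (by linarith)
    (by rwa [sub_sub_cancel, sub_sub_cancel, mul_comm]) hη
  rw [dyadicValue_one_sub he] at hright
  refine ⟨min δ₁ δ₂, lt_min hδ₁ hδ₂, fun z hz hLz => ?_⟩
  rcases lt_trichotomy z y with hzy | rfl | hzy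
  · rw [abs_sub_comm (L z), abs_of_pos (sub_pos.2 (hmono hz hy hzy))] at hLz ⊢
    exact hleft z hz hzy (hLz.trans_le (min_le_left _ _))
  · simp
  · rw [abs_of_pos (sub_pos.2 (hmono hy hz hzy))] at hLz ⊢
    have := hright (1 - z) (Icc.mem_iff_one_sub_mem.1 hz) (by linarith)
      (by simpa only [sub_sub_cancel, sub_sub_sub_cancel_left]
        using hLz.trans_le (min_le_right _ _))
    simpa only [sub_sub_cancel, sub_sub_sub_cancel_left, takagi_one_sub] using this

end Derivative

lemma tendsto_comp_div_of_forall_exists_abs_sub_le {L M f : ℝ → ℝ} {x : ℝ}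
    (hx : x ∈ Ioo 0 1) (hM : MapsTo M (Icc 0 1) (Icc 0 1)) (hLM : ∀ t ∈ Icc 0 1, L (M t) = t)
    (hf : ∀ η > 0, ∃ δ > 0, ∀ z ∈ Icc 0 1, |L z - L (M x)| < δ →
      |f z - f (M x)| ≤ η * |L z - L (M x)|) :
    Tendsto (fun h => (f (M (x + h)) - f (M x)) / h) (𝓝[≠] 0) (𝓝 0) := by
  rw [Metric.tendsto_nhdsWithin_nhds]
  intro η hη
  obtain ⟨δ, hδ, hfδ⟩ := hf (η / 2) (half_pos hη)
  refine ⟨min δ (min x (1 - x)), lt_min hδ (lt_min hx.1 (by linarith [hx.2])),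
    fun h hh0 hh => ?_⟩
  rw [Real.dist_eq, sub_zero] at hh ⊢
  obtain ⟨hhδ, hhx0, hhx1⟩ : |h| < δ ∧ |h| < x ∧ |h| < 1 - x := by
    simpa only [lt_min_iff] using hh
  have hxh : x + h ∈ Icc 0 1 :=
    ⟨by linarith [neg_abs_le h], by linarith [le_abs_self h]⟩
  have key := hfδ (M (x + h)) (hM hxh)
  rw [hLM _ hxh, hLM _ (Ioo_subset_Icc_self hx), add_sub_cancel_left] at key
  have hh0' : 0 < |h| := abs_pos.2 hh0
  rw [abs_div, div_lt_iff₀ hh0']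
  linarith [key hhδ, mul_pos hη hh0']

theorem takagi_comp_inverse_deriv_zero_general (a : ℝ) (ha0 : 0 < a) (ha1 : a < 1)
    (L : ℝ → ℝ) (hL : deRham a L)
    (hmono : StrictMonoOn L (Set.Icc 0 1))
    (M : ℝ → ℝ) (hM : ∀ y ∈ Set.Icc (0:ℝ) 1, M (L y) = y)
    (hM2 : ∀ x ∈ Set.Icc (0:ℝ) 1, L (M x) = x)
    (T : ℝ → ℝ)
    (hT : ∀ z : ℝ, T z = ∑' k : ℕ, |2 ^ k * z - (round (2 ^ k * z) : ℝ)| / 2 ^ k)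
    (x : ℝ) (hx : x ∈ Set.Icc (0:ℝ) 1)
    (ε : ℕ → ℕ) (hε : ∀ n, ε n ≤ 1)
    (hinf1 : ∀ N, ∃ n ≥ N, ε n = 1) (hinf0 : ∀ N, ∃ n ≥ N, ε n = 0)
    (hy : M x = ∑' n : ℕ, (ε (n+1) : ℝ) / 2 ^ (n+1))
    (d : ℝ)
    (hd : Tendsto (fun n : ℕ => (∑ k ∈ Finset.range n, (ε (k+1) : ℝ)) / n)
      atTop (𝓝 d))
    (hd0 : 0 < d) (hd1 : d < 1)
    (hcrit : a ^ (1 - d) * (1-a) ^ d > 1/2) :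
    Tendsto (fun h : ℝ => (T (M (x+h)) - T (M x)) / h) (𝓝[≠] 0) (𝓝 0) := by
  obtain rfl : T = takagi := funext hT
  set e : ℕ → ℕ := fun n => ε (n + 1)
  have he : ∀ i, e i ≤ 1 := fun i => hε (i + 1)
  have shift : ∀ {p : ℕ → Prop}, (∀ N, ∃ n ≥ N, p n) → ∀ N, ∃ n ≥ N, p (n + 1) := fun h N =>
    let ⟨n, hn, hp⟩ := h (N + 1)
    ⟨n - 1, by omega, by rwa [Nat.sub_add_cancel (by omega)]⟩
  have hMx : M x = dyadicValue e := hy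
  have hxIoo : x ∈ Ioo 0 1 := by
    have hyIoo := hMx ▸ dyadicValue_mem_Ioo he (shift hinf1) (shift hinf0)
    have hyIcc := Ioo_subset_Icc_self hyIoo
    rw [← hM2 x hx, ← hL.apply_zero ha1, ← hL.apply_one ha0]
    exact ⟨hmono ⟨le_rfl, zero_le_one⟩ hyIcc hyIoo.1, hmono hyIcc ⟨zero_le_one, le_rfl⟩ hyIoo.2⟩
  have hMmaps : MapsTo M (Icc 0 1) (Icc 0 1) := fun t ht => by
    obtain ⟨u, hu, rfl⟩ := hL.surjOn ha0 ha1 ht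
    rwa [hM u hu]
  refine tendsto_comp_div_of_forall_exists_abs_sub_le hxIoo hMmaps hM2 fun η hη => ?_
  rw [hMx]
  exact exists_abs_takagi_sub_le ha0 ha1 hL hmono he (shift hinf1) (shift hinf0) hd hd0 hd1
    hcrit hη

theorem takagi_comp_inverse_deriv_zero (a : ℝ) (ha0 : 0 < a) (ha1 : a < 1)
    (ha : a ≠ 1/2) (L : ℝ → ℝ) (hL : deRham a L)
    (hmono : StrictMonoOn L (Set.Icc 0 1))
    (M : ℝ → ℝ) (hM : ∀ y ∈ Set.Icc (0:ℝ) 1, M (L y) = y)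
    (hM2 : ∀ x ∈ Set.Icc (0:ℝ) 1, L (M x) = x)
    (T : ℝ → ℝ)
    (hT : ∀ z : ℝ, T z = ∑' k : ℕ, |2 ^ k * z - (round (2 ^ k * z) : ℝ)| / 2 ^ k)
    (x : ℝ) (hx : x ∈ Set.Icc (0:ℝ) 1)
    (ε : ℕ → ℕ) (hε : ∀ n, ε n ≤ 1)
    (hinf1 : ∀ N, ∃ n ≥ N, ε n = 1) (hinf0 : ∀ N, ∃ n ≥ N, ε n = 0)
    (hy : M x = ∑' n : ℕ, (ε (n+1) : ℝ) / 2 ^ (n+1))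
    (d : ℝ)
    (hd : Tendsto (fun n : ℕ => (∑ k ∈ Finset.range n, (ε (k+1) : ℝ)) / n)
      atTop (𝓝 d))
    (hd0 : 0 < d) (hd1 : d < 1)
    (hcrit : a ^ (1 - d) * (1-a) ^ d > 1/2) :
    Tendsto (fun h : ℝ => (T (M (x+h)) - T (M x)) / h) (𝓝[≠] 0) (𝓝 0) :=
  takagi_comp_inverse_deriv_zero_general a ha0 ha1 L hL hmono M hM hM2 T hT x hx ε hε hinf1 hinf0 hy
    d hd hd0 hd1 hcrit
end
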